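/- arXiv:1709.02917 — 2 statements merged into one kernel-verified Lean document; each statement's English description precedes it below -/
import Mathlib

section
/- Let x, y, n1, n2, n3 be complex numbers with |n1|, |n2|, |n3| ≤ ε·min(|x|,|y|) for some ε ≤ 1/9, and let θ ∈ [0, π] be the (unoriented) angle between x and y, so that cos(π−θ) = −Re(x·conj(y))/(|x|·|y|). Define θ'' ∈ [0,π] by cos(π−θ'') = (|x+n1|² + |y+n2|² − |x+y+n1+n2+n3|²)/(2|x+n1|·|y+n2|). Then there is an absolute constant c₃ > 0 such that |cos(π−θ'') − cos(π−θ)| ≤ c₃·ε. -/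
open Complex

set_option maxHeartbeats 1000000 in
/-- Bound on the error term in the expanded law-of-cosines numerator. -/
private lemma auxE (a b m u1 u2 u3 ε t1 t2 t3 t4 t5 : ℝ)
    (ha : 0 < a) (hb : 0 < b) (hma : m ≤ a) (hmb : m ≤ b) (hm0 : 0 ≤ m)
    (hε : 0 ≤ ε) (hε9 : ε ≤ 1/9)
    (hu1 : 0 ≤ u1) (hu2 : 0 ≤ u2) (hu3 : 0 ≤ u3)
    (h1 : u1 ≤ ε * m) (h2 : u2 ≤ ε * m) (h3 : u3 ≤ ε * m)
    (ht1 : |t1| ≤ a * u2) (ht2 : |t2| ≤ u1 * b) (ht3 : |t3| ≤ u1 * u2)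
    (ht4 : |t4| ≤ (a + b + u1 + u2) * u3) (ht5 : 0 ≤ t5) (ht5' : t5 ≤ u3 * u3) :
    |(-2*t1 - 2*t2 - 2*t3 - 2*t4 - t5)| ≤ 13 * (ε * (a * b)) := by
  have hmm1 : m * a ≤ a * b := by nlinarith
  have hmm2 : m * b ≤ a * b := by nlinarith
  have hmm3 : m * m ≤ a * b := by nlinarith
  have hεmb : ε * m ≤ ε * b := mul_le_mul_of_nonneg_left hmb hε
  have hεma : ε * m ≤ ε * a := mul_le_mul_of_nonneg_left hma hε
  have hεaa : ε * a ≤ a := by nlinarith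
  have e1 : |t1| ≤ ε * (a * b) := by
    refine ht1.trans ?_
    calc a * u2 ≤ a * (ε * b) := mul_le_mul_of_nonneg_left (h2.trans hεmb) ha.le
      _ = ε * (a * b) := by ring
  have e2 : |t2| ≤ ε * (a * b) := by
    refine ht2.trans ?_
    calc u1 * b ≤ (ε * a) * b := mul_le_mul_of_nonneg_right (h1.trans hεma) hb.le
      _ = ε * (a * b) := by ring
  have e3 : |t3| ≤ ε * (a * b) := by
    refine ht3.trans ?_
    have hu1' : u1 ≤ a := le_trans (h1.trans hεma) hεaa
    calc u1 * u2 ≤ a * (ε * b) :=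
          mul_le_mul hu1' (h2.trans hεmb) hu2 ha.le
      _ = ε * (a * b) := by ring
  have e4 : |t4| ≤ 3 * (ε * (a * b)) := by
    refine ht4.trans ?_
    have step : (a + b + u1 + u2) * u3 ≤ (a + b + ε * m + ε * m) * (ε * m) := by
      have hl : a + b + u1 + u2 ≤ a + b + ε * m + ε * m := by linarith
      have h0 : (0:ℝ) ≤ a + b + u1 + u2 := by linarith
      exact mul_le_mul hl h3 hu3 (by linarith)
    refine step.trans ?_
    nlinarith [mul_le_mul_of_nonneg_left hmm1 hε, mul_le_mul_of_nonneg_left hmm2 hε,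
      mul_le_mul_of_nonneg_left hmm3 (mul_nonneg hε hε),
      mul_le_mul_of_nonneg_right (show ε * ε ≤ (1:ℝ)/9 * ε by nlinarith)
        (mul_pos ha hb).le]
  have e5 : t5 ≤ ε * (a * b) := by
    refine (ht5'.trans (mul_le_mul h3 h3 hu3 (mul_nonneg hε hm0))).trans ?_
    nlinarith [mul_le_mul_of_nonneg_left hmm3 (mul_nonneg hε hε),
      mul_le_mul_of_nonneg_right (show ε * ε ≤ (1:ℝ)/9 * ε by nlinarith)
        (mul_pos ha hb).le, mul_pos ha hb]
  obtain ⟨e1a, e1b⟩ := abs_le.mp e1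
  obtain ⟨e2a, e2b⟩ := abs_le.mp e2
  obtain ⟨e3a, e3b⟩ := abs_le.mp e3
  obtain ⟨e4a, e4b⟩ := abs_le.mp e4
  rw [abs_le]
  constructor <;> linarith

set_option maxHeartbeats 1000000 in
/-- The final real-arithmetic estimate. -/
private lemma auxF (a b A B R N ε : ℝ)
    (ha : 0 < a) (hb : 0 < b) (hε : 0 ≤ ε) (hε9 : ε ≤ 1/9)
    (hA1 : (1 - ε) * a ≤ A) (hA2 : A ≤ (1 + ε) * a)
    (hB1 : (1 - ε) * b ≤ B) (hB2 : B ≤ (1 + ε) * b)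
    (hApos : 0 < A) (hBpos : 0 < B)
    (hE : |N + 2 * R| ≤ 13 * (ε * (a * b))) (hR : |R| ≤ a * b) :
    |N / (2 * A * B) - (-R / (a * b))| ≤ 20 * ε := by
  obtain ⟨hRa, hRb⟩ := abs_le.mp hR
  have hABd : |A * B - a * b| ≤ 3 * ε * (a * b) := by
    rw [abs_le]
    constructor <;> nlinarith [mul_le_mul hA2 hB2 hBpos.le (by nlinarith : (0:ℝ) ≤ (1+ε)*a),
      mul_le_mul hA1 hB1 (by nlinarith : (0:ℝ) ≤ (1-ε)*b) hApos.le,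
      mul_nonneg (mul_nonneg hε (show (0:ℝ) ≤ 1 - ε by linarith)) (mul_pos ha hb).le,
      mul_nonneg (mul_nonneg hε hε) (mul_pos ha hb).le]
  have hABl : (128/81) * (a * b) ≤ 2 * (A * B) := by
    nlinarith [mul_le_mul hA1 hB1 (by nlinarith : (0:ℝ) ≤ (1-ε)*b) hApos.le,
      mul_nonneg (mul_nonneg (show (0:ℝ) ≤ 1/9 - ε by linarith)
        (show (0:ℝ) ≤ 17/9 - ε by linarith)) (mul_pos ha hb).le]
  have hden : (0:ℝ) < 2 * A * B * (a * b) := by positivity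
  have hkey : N / (2 * A * B) - (-R / (a * b)) =
      (N * (a * b) + 2 * A * B * R) / (2 * A * B * (a * b)) := by
    field_simp
    try ring
  rw [hkey, abs_div, abs_of_pos hden, div_le_iff₀ hden]
  have hnum : |N * (a * b) + 2 * A * B * R| ≤ 19 * ε * (a * b) ^ 2 := by
    have heq : N * (a * b) + 2 * A * B * R = (N + 2 * R) * (a * b) + 2 * R * (A * B - a * b) := by
      ring
    rw [heq]
    calc |(N + 2 * R) * (a * b) + 2 * R * (A * B - a * b)|
        ≤ |(N + 2 * R) * (a * b)| + |2 * R * (A * B - a * b)| := abs_add_le _ _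
      _ = |N + 2 * R| * (a * b) + 2 * |R| * |A * B - a * b| := by
          rw [abs_mul (N + 2 * R), abs_mul (2 * R), abs_of_pos (mul_pos ha hb),
            abs_mul 2 R]
          norm_num
      _ ≤ 13 * (ε * (a * b)) * (a * b) + 2 * (a * b) * (3 * ε * (a * b)) := by
          have h1' : |N + 2 * R| * (a * b) ≤ 13 * (ε * (a * b)) * (a * b) :=
            mul_le_mul_of_nonneg_right hE (mul_pos ha hb).le
          have h2' : 2 * |R| * |A * B - a * b| ≤ 2 * (a * b) * (3 * ε * (a * b)) := by
            have := abs_nonneg (A * B - a * b)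
            nlinarith [abs_nonneg R]
          linarith
      _ = 19 * ε * (a * b) ^ 2 := by ring
  have hfin : 19 * ε * (a * b) ^ 2 ≤ 20 * ε * (2 * A * B * (a * b)) := by
    nlinarith [mul_le_mul_of_nonneg_left hABl (by positivity : (0:ℝ) ≤ 20 * ε),
      mul_pos ha hb, mul_nonneg hε (mul_pos ha hb).le,
      mul_le_mul_of_nonneg_right
        (mul_le_mul_of_nonneg_left hABl (by positivity : (0:ℝ) ≤ 20 * ε))
        (mul_pos ha hb).le]
  linarith

set_option maxHeartbeats 1000000 in
/-- Law-of-Cosines angle estimate from perturbed norms: the cosine computed from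
`|x+n1|, |y+n2|, |x+y+n1+n2+n3|` approximates `cos(π-θ) = -Re(x conj y)/(|x||y|)`
up to `c₃ · ε`. -/
theorem stmt0 : ∃ c₃ : ℝ, 0 < c₃ ∧ ∀ (x y n1 n2 n3 : ℂ) (ε : ℝ),
    x ≠ 0 → y ≠ 0 → 0 ≤ ε → ε ≤ 1/9 →
    ‖n1‖ ≤ ε * min (‖x‖) (‖y‖) →
    ‖n2‖ ≤ ε * min (‖x‖) (‖y‖) →
    ‖n3‖ ≤ ε * min (‖x‖) (‖y‖) →
    |((‖x + n1‖)^2 + (‖y + n2‖)^2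
        - (‖x + y + n1 + n2 + n3‖)^2)
      / (2 * ‖x + n1‖ * ‖y + n2‖)
      - (-(x * (starRingEnd ℂ) y).re / (‖x‖ * ‖y‖))| ≤ c₃ * ε := by
  refine ⟨20, by norm_num, ?_⟩
  intro x y n1 n2 n3 ε hx hy hε hε9 h1 h2 h3
  have hre : ∀ u v : ℂ, |(u * (starRingEnd ℂ) v).re| ≤ ‖u‖ * ‖v‖ := by
    intro u v
    calc |(u * (starRingEnd ℂ) v).re| ≤ ‖u * (starRingEnd ℂ) v‖ :=
          Complex.abs_re_le_norm _
      _ = ‖u‖ * ‖v‖ := by rw [norm_mul, Complex.norm_conj]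
  set a := ‖x‖ with ha_def
  set b := ‖y‖ with hb_def
  have ha : 0 < a := norm_pos_iff.mpr hx
  have hb : 0 < b := norm_pos_iff.mpr hy
  set m := min a b with hm_def
  have hma : m ≤ a := min_le_left _ _
  have hmb : m ≤ b := min_le_right _ _
  have hm0 : 0 ≤ m := le_min ha.le hb.le
  set A := ‖x + n1‖ with hA_def
  set B := ‖y + n2‖ with hB_def
  set C := ‖x + y + n1 + n2 + n3‖ with hC_def
  -- two-sided bounds on A and B
  have hAa : |A - a| ≤ ε * m := by
    calc |A - a| ≤ ‖(x + n1) - x‖ := abs_norm_sub_norm_le _ _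
      _ = ‖n1‖ := by ring_nf
      _ ≤ ε * m := h1
  have hBb : |B - b| ≤ ε * m := by
    calc |B - b| ≤ ‖(y + n2) - y‖ := abs_norm_sub_norm_le _ _
      _ = ‖n2‖ := by ring_nf
      _ ≤ ε * m := h2
  obtain ⟨hAa1, hAa2⟩ := abs_le.mp hAa
  obtain ⟨hBb1, hBb2⟩ := abs_le.mp hBb
  have hεm : ε * m ≤ ε * a := mul_le_mul_of_nonneg_left hma hε
  have hεm' : ε * m ≤ ε * b := mul_le_mul_of_nonneg_left hmb hε
  have hεa : ε * a ≤ a := by nlinarith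
  have hεb : ε * b ≤ b := by nlinarith
  have hA1 : (1 - ε) * a ≤ A := by linarith [hAa1, hεm]
  have hA2 : A ≤ (1 + ε) * a := by linarith [hAa2, hεm]
  have hB1 : (1 - ε) * b ≤ B := by linarith [hBb1, hεm']
  have hB2 : B ≤ (1 + ε) * b := by linarith [hBb2, hεm']
  have hApos : 0 < A := lt_of_lt_of_le (by nlinarith) hA1
  have hBpos : 0 < B := lt_of_lt_of_le (by nlinarith) hB1
  set R := (x * (starRingEnd ℂ) y).re with hR_def
  set N := A ^ 2 + B ^ 2 - C ^ 2 with hN_def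
  -- algebraic identity for N + 2R
  have hid : N + 2 * R = -2 * (x * (starRingEnd ℂ) n2).re - 2 * (n1 * (starRingEnd ℂ) y).re
      - 2 * (n1 * (starRingEnd ℂ) n2).re
      - 2 * ((x + y + n1 + n2) * (starRingEnd ℂ) n3).re - Complex.normSq n3 := by
    rw [hN_def, hA_def, hB_def, hC_def, hR_def]
    simp only [Complex.sq_norm, Complex.normSq_apply, Complex.mul_re, Complex.add_re,
      Complex.add_im, Complex.conj_re, Complex.conj_im]
    ring
  have habs4 : ‖x + y + n1 + n2‖ ≤ a + b + ‖n1‖ + ‖n2‖ := by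
    calc ‖x + y + n1 + n2‖
        ≤ ‖x + y + n1‖ + ‖n2‖ := norm_add_le _ _
      _ ≤ ‖x + y‖ + ‖n1‖ + ‖n2‖ := by
          have := norm_add_le (x + y) n1; linarith
      _ ≤ a + b + ‖n1‖ + ‖n2‖ := by
          have := norm_add_le x y; linarith
  have ht4 : |((x + y + n1 + n2) * (starRingEnd ℂ) n3).re|
      ≤ (a + b + ‖n1‖ + ‖n2‖) * ‖n3‖ := by
    refine (hre (x + y + n1 + n2) n3).trans ?_
    exact mul_le_mul_of_nonneg_right habs4 (norm_nonneg n3)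
  have ht5 : Complex.normSq n3 ≤ ‖n3‖ * ‖n3‖ :=
    le_of_eq (by rw [← Complex.sq_norm, sq])
  have hE : |N + 2 * R| ≤ 13 * (ε * (a * b)) := by
    rw [hid]
    exact auxE a b m (‖n1‖) (‖n2‖) (‖n3‖) ε
      ((x * (starRingEnd ℂ) n2).re) ((n1 * (starRingEnd ℂ) y).re)
      ((n1 * (starRingEnd ℂ) n2).re) (((x + y + n1 + n2) * (starRingEnd ℂ) n3).re)
      (Complex.normSq n3)
      ha hb hma hmb hm0 hε hε9
      (norm_nonneg n1) (norm_nonneg n2) (norm_nonneg n3)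
      h1 h2 h3 (hre x n2) (hre n1 y) (hre n1 n2) ht4 (Complex.normSq_nonneg n3) ht5
  exact auxF a b A B R N ε ha hb hε hε9 hA1 hA2 hB1 hB2 hApos hBpos hE (hre x y)
end

section
/- Let x, y be nonzero complex numbers and n1 ∈ ℂ with |n1| ≤ ε·|x| for ε ≤ 1/9. Let θ be the angle between x and y and θ' the angle between x+n1 and y. Then |cos(π−θ') − cos(π−θ)| ≤ c₂·ε for an absolute constant c₂, using that |x|/|x+n1| ∈ [1/(1+ε), 1/(1−ε)]. -/
open Complex

/-- Perturbing `x` by `n1` with `|n1| ≤ ε|x|`, `ε ≤ 1/9`, changes the cosine of the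
angle with `y` by at most `c₂ · ε`. -/
theorem stmt1 : ∃ c₂ : ℝ, 0 < c₂ ∧ ∀ (x y n1 : ℂ) (ε : ℝ),
    x ≠ 0 → y ≠ 0 → 0 ≤ ε → ε ≤ 1/9 →
    ‖n1‖ ≤ ε * ‖x‖ →
    |(-((x + n1) * (starRingEnd ℂ) y).re / (‖x + n1‖ * ‖y‖))
      - (-(x * (starRingEnd ℂ) y).re / (‖x‖ * ‖y‖))| ≤ c₂ * ε := by
  refine ⟨3, by norm_num, fun x y n1 ε hx hy hε hε9 hn1 => ?_⟩
  set X := ‖x‖ with hXdef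
  set Y := ‖y‖ with hYdef
  set A := ‖x + n1‖ with hAdef
  have hXpos : 0 < X := norm_pos_iff.mpr hx
  have hYpos : 0 < Y := norm_pos_iff.mpr hy
  have hAX : |A - X| ≤ ε * X := by
    have := abs_norm_sub_norm_le (x + n1) x
    rw [add_sub_cancel_left] at this
    exact this.trans hn1
  have hApos : (8/9) * X ≤ A := by
    have h1 : X - A ≤ ε * X := (le_abs_self _).trans (by rwa [abs_sub_comm] at hAX)
    nlinarith
  have hA0 : 0 < A := lt_of_lt_of_le (by positivity) hApos
  set p := ((x + n1) * (starRingEnd ℂ) y).re with hpdef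
  set q := (x * (starRingEnd ℂ) y).re with hqdef
  set r := (n1 * (starRingEnd ℂ) y).re with hrdef
  have hpqr : p = q + r := by
    rw [hpdef, hqdef, hrdef, add_mul, Complex.add_re]
  have hq : |q| ≤ X * Y := by
    calc |q| ≤ ‖x * (starRingEnd ℂ) y‖ := Complex.abs_re_le_norm _
    _ = X * Y := by rw [norm_mul, Complex.norm_conj]
  have hr : |r| ≤ ε * X * Y := by
    calc |r| ≤ ‖n1 * (starRingEnd ℂ) y‖ := Complex.abs_re_le_norm _
    _ = ‖n1‖ * Y := by rw [norm_mul, Complex.norm_conj]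
    _ ≤ ε * X * Y := by nlinarith
  have key : -p / (A * Y) - -q / (X * Y) = (q * (A - X) - r * X) / (A * X * Y) := by
    rw [hpqr]
    field_simp
    ring
  rw [key, abs_div, abs_of_pos (by positivity : (0:ℝ) < A * X * Y),
    div_le_iff₀ (by positivity : (0:ℝ) < A * X * Y)]
  have hnum : |q * (A - X) - r * X| ≤ 2 * ε * X^2 * Y := by
    calc |q * (A - X) - r * X| ≤ |q * (A - X)| + |r * X| := abs_sub _ _
    _ = |q| * |A - X| + |r| * |X| := by rw [abs_mul, abs_mul]
    _ ≤ (X * Y) * (ε * X) + (ε * X * Y) * X := by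
        rw [abs_of_pos hXpos]
        gcongr <;> positivity
    _ = 2 * ε * X^2 * Y := by ring
  calc |q * (A - X) - r * X| ≤ 2 * ε * X^2 * Y := hnum
  _ ≤ 3 * ε * (A * X * Y) := by nlinarith [mul_nonneg (mul_nonneg (mul_nonneg hε hXpos.le) hYpos.le) (by linarith : (0:ℝ) ≤ 3*A - 2*X)]
end
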